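/- arXiv:1304.4117 — 3 statements merged into one kernel-verified Lean document; each statement's English description precedes it below -/
import Mathlib

section
/- Let G be an infinite discrete group and let μ be an irreducible probability measure on G. Then for every f ∈ c₀(G), the sup norms ‖f ⋆ μ^{⋆n}‖_∞ converge to 0 as n → ∞; that is, the convolution operators f ↦ f ⋆ μ^{⋆n} on c₀(G) converge to zero in the strong operator topology. -/
open Filter Topology
open scoped Classical

variable {G : Type*}

/-- Convolution of two summable "measures" (functions) on a discrete group:
`(ν ⋆ μ)(g) = ∑_{a·b=g} ν(a) μ(b)`. -/
noncomputable def mconv [Group G] (ν μ : G → ℝ) : G → ℝ :=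
  fun g => ∑' a : G, ν a * μ (a⁻¹ * g)

/-- The `n`-th convolution power of `μ`, with `convPow μ 0 = δ_e` and `convPow μ 1 = μ`. -/
noncomputable def convPow [Group G] (μ : G → ℝ) : ℕ → G → ℝ
  | 0 => fun g => if g = 1 then 1 else 0
  | n + 1 => mconv (convPow μ n) μ

/-- `μ` is a probability measure on the discrete group `G`. -/
def IsProbMeas [Group G] (μ : G → ℝ) : Prop :=
  (∀ g, 0 ≤ μ g) ∧ HasSum μ 1

/-- `μ` is irreducible: every point is charged by some convolution power `μ^{⋆n}`, `n ≥ 1`. -/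
def MeasIrreducible [Group G] (μ : G → ℝ) : Prop :=
  ∀ g : G, ∃ n : ℕ, 1 ≤ n ∧ 0 < convPow μ n g

/-- The convolution action of a measure `μ` on a function `f ∈ c₀(G)`:
`(f ⋆ μ)(g) = ∑_h f(g·h) μ(h)`. -/
noncomputable def actConv [Group G] (f : G → ℂ) (μ : G → ℝ) : G → ℂ :=
  fun g => ∑' h : G, f (g * h) * (μ h : ℂ)

/-- A function on a discrete space vanishes at infinity iff it tends to `0`
along the cofinite filter. -/
def ZeroAtInfty (f : G → ℂ) : Prop := Tendsto f cofinite (𝓝 0)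

/-!
Convolving with a probability measure cannot raise a maximum, so the maximal masses
`Q n = ⨆ g, μ^{⋆n}(g)` decrease to some `c ≥ 0`. If `c > 0`, every support of a `μ^{⋆m}` has at
most `2 / c` points. Some `μ^{⋆n₀}` charges the identity, so along each residue class mod `n₀`
these supports increase; by irreducibility their finitely many unions cover `G`, which would
make `G` finite. Hence `Q n → 0`, and for `f ∈ c₀(G)` small off a finite set `s`,
`‖f ⋆ μ^{⋆n}‖_∞ ≤ ε + Q n * ∑ x ∈ s, ‖f x‖`.
-/

theorem Directed.finite_iUnion_of_card_le {α ι : Type*} [Nonempty ι] {S : ι → Set α}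
    (hS : Directed (· ⊆ ·) S) (K : ℕ) (hK : ∀ i (T : Finset α), ↑T ⊆ S i → T.card ≤ K) :
    (⋃ i, S i).Finite := by
  by_contra hinf
  obtain ⟨T, hTS, hcard⟩ := Set.Infinite.exists_subset_card_eq hinf (K + 1)
  obtain ⟨i, hi⟩ := hS.exists_mem_subset_of_finset_subset_biUnion hTS
  have := hK i T hi
  omega

section Convolution

variable [Group G] {ν ρ μ : G → ℝ}

theorem HasSum.comp_inv_mul {s : ℝ} (h : HasSum ν s) (g : G) :
    HasSum (fun a => ν (a⁻¹ * g)) s :=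
  ((Equiv.inv G).trans (Equiv.mulRight g)).hasSum_iff.2 h

namespace IsProbMeas

theorem le_one (hν : IsProbMeas ν) (g : G) : ν g ≤ 1 :=
  le_hasSum hν.2 g fun a _ => hν.1 a

theorem bddAbove_range (hν : IsProbMeas ν) : BddAbove (Set.range ν) :=
  ⟨1, by rintro _ ⟨g, rfl⟩; exact hν.le_one g⟩

/-- `ν ⊗ ρ` transported by the shear `(a, b) ↦ (a * b, a)`. -/
theorem hasSum_mconv_weights (hν : IsProbMeas ν) (hρ : IsProbMeas ρ) :
    HasSum (fun p : G × G => ν p.2 * ρ (p.2⁻¹ * p.1)) 1 := by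
  have hprod : HasSum (fun p : G × G => ν p.1 * ρ p.2) (1 * 1) :=
    hν.2.mul hρ.2 (hν.2.summable.mul_of_nonneg hρ.2.summable hν.1 hρ.1)
  rw [one_mul] at hprod
  refine ((Equiv.prodShear (Equiv.refl G) Equiv.mulLeft).trans
    (Equiv.prodComm G G)).hasSum_iff.1 ?_
  simpa [Function.comp_def] using hprod

theorem summable_mconv_term (hν : IsProbMeas ν) (hρ : IsProbMeas ρ) (g : G) :
    Summable fun a => ν a * ρ (a⁻¹ * g) :=
  (hν.hasSum_mconv_weights hρ).summable.prod_factor g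

theorem mconv (hν : IsProbMeas ν) (hρ : IsProbMeas ρ) : IsProbMeas (mconv ν ρ) :=
  ⟨fun _ => tsum_nonneg fun _ => mul_nonneg (hν.1 _) (hρ.1 _),
    (hν.hasSum_mconv_weights hρ).prod_fiberwise fun g => (hν.summable_mconv_term hρ g).hasSum⟩

end IsProbMeas

theorem mconv_assoc (hν : IsProbMeas ν) (hρ : IsProbMeas ρ) (hμ : IsProbMeas μ) :
    mconv (mconv ν ρ) μ = mconv ν (mconv ρ μ) := by
  funext g
  have hsummable : Summable (Function.uncurry fun b a => ν a * ρ (a⁻¹ * b) * μ (b⁻¹ * g)) :=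
    (hν.hasSum_mconv_weights hρ).summable.of_nonneg_of_le
      (fun p => mul_nonneg (mul_nonneg (hν.1 _) (hρ.1 _)) (hμ.1 _))
      fun p => mul_le_of_le_one_right (mul_nonneg (hν.1 _) (hρ.1 _)) (hμ.le_one _)
  have hinner (a : G) :
      ν a * mconv ρ μ (a⁻¹ * g) = ∑' b, ν a * ρ (a⁻¹ * b) * μ (b⁻¹ * g) := by
    rw [mconv, ← tsum_mul_left]
    conv_rhs => rw [← (Equiv.mulLeft a).tsum_eq]
    simp [mul_assoc]
  have houter (b : G) :
      mconv ν ρ b * μ (b⁻¹ * g) = ∑' a, ν a * ρ (a⁻¹ * b) * μ (b⁻¹ * g) :=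
    tsum_mul_right.symm
  change ∑' b, mconv ν ρ b * μ (b⁻¹ * g) = ∑' a, ν a * mconv ρ μ (a⁻¹ * g)
  simp only [houter, hinner]
  exact hsummable.tsum_comm.symm

theorem mconv_le_of_le (hν : IsProbMeas ν) (hρ : IsProbMeas ρ) {q : ℝ} (hq : ∀ a, ν a ≤ q)
    (g : G) : mconv ν ρ g ≤ q := by
  have hshift := hρ.2.comp_inv_mul g
  calc mconv ν ρ g ≤ ∑' a, q * ρ (a⁻¹ * g) :=
        (hν.summable_mconv_term hρ g).tsum_le_tsum
          (fun a => mul_le_mul_of_nonneg_right (hq a) (hρ.1 _)) (hshift.summable.mul_left q)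
    _ = q := by rw [tsum_mul_left, hshift.tsum_eq, mul_one]

theorem mconv_pos_mul (hν : IsProbMeas ν) (hρ : IsProbMeas ρ) {x y : G} (hx : 0 < ν x)
    (hy : 0 < ρ y) : 0 < mconv ν ρ (x * y) := by
  refine lt_of_lt_of_le ?_ ((hν.summable_mconv_term hρ (x * y)).le_tsum x
    fun a _ => mul_nonneg (hν.1 a) (hρ.1 _))
  rwa [inv_mul_cancel_left, mul_pos_iff_of_pos_left hx]

theorem mul_sub_le_sub_mconv (hν : IsProbMeas ν) (hρ : IsProbMeas ρ) {q : ℝ}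
    (hq : ∀ a, ρ a ≤ q) (x g : G) :
    ν x * (q - ρ (x⁻¹ * g)) ≤ q - mconv ν ρ g := by
  have hdefect : HasSum (fun a => ν a * q - ν a * ρ (a⁻¹ * g)) (1 * q - mconv ν ρ g) :=
    (hν.2.mul_right q).sub (hν.summable_mconv_term hρ g).hasSum
  rw [one_mul] at hdefect
  rw [mul_sub]
  exact le_hasSum hdefect x fun a _ => by
    rw [← mul_sub]
    exact mul_nonneg (hν.1 a) (sub_nonneg.2 (hq _))

theorem mconv_convPow_zero : mconv ν (convPow μ 0) = ν := by
  funext g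
  rw [mconv, tsum_eq_single g fun a ha => by simp [convPow, inv_mul_eq_one, ha]]
  simp [convPow]

theorem IsProbMeas.convPow (hμ : IsProbMeas μ) (n : ℕ) :
    IsProbMeas (convPow μ n) := by
  induction n with
  | zero =>
    exact ⟨fun g => by dsimp only [_root_.convPow]; split_ifs <;> norm_num,
      hasSum_ite_eq (1 : G) (1 : ℝ)⟩
  | succ n ih => exact ih.mconv hμ

theorem convPow_add (hμ : IsProbMeas μ) (m n : ℕ) :
    convPow μ (m + n) = mconv (convPow μ m) (convPow μ n) := by
  induction n with
  | zero => rw [add_zero, mconv_convPow_zero]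
  | succ n ih =>
    change mconv (convPow μ (m + n)) μ = mconv (convPow μ m) (mconv (convPow μ n) μ)
    rw [ih, mconv_assoc (hμ.convPow m) (hμ.convPow n) hμ]

theorem convPow_pos_mul (hμ : IsProbMeas μ) {m n : ℕ} {x y : G}
    (hx : 0 < convPow μ m x) (hy : 0 < convPow μ n y) : 0 < convPow μ (m + n) (x * y) := by
  rw [convPow_add hμ]
  exact mconv_pos_mul (hμ.convPow m) (hμ.convPow n) hx hy

theorem antitone_iSup_convPow (hμ : IsProbMeas μ) :
    Antitone fun n => ⨆ g, convPow μ n g :=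
  antitone_nat_of_succ_le fun n => ciSup_le fun g =>
    mconv_le_of_le (hμ.convPow n) hμ (fun a => le_ciSup (hμ.convPow n).bddAbove_range a) g

/-- For large `N`, some `μ^{⋆(m+N)}(g) = ∑ₓ μ^{⋆m}(x) μ^{⋆N}(x⁻¹ g)` is close to `c`, which
forces `μ^{⋆N}(x⁻¹ g) ≥ c / 2` at every `x` in the support of `μ^{⋆m}`. -/
theorem card_mul_le_two_of_isGLB_iSup_convPow (hμ : IsProbMeas μ) {c : ℝ} (hc : 0 < c)
    (hglb : IsGLB (Set.range fun n => ⨆ g, convPow μ n g) c) (m : ℕ) (T : Finset G)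
    (hT : ∀ x ∈ T, 0 < convPow μ m x) : T.card * c ≤ 2 := by
  obtain rfl | hTne := T.eq_empty_or_nonempty
  · norm_num
  set P := convPow μ
  set δ := T.inf' hTne (P m)
  have hδ : 0 < δ := (Finset.lt_inf'_iff _).2 hT
  obtain ⟨_, ⟨N, rfl⟩, hcN, hN⟩ :=
    hglb.exists_between (lt_add_of_pos_right c (by positivity : 0 < δ * c / 8))
  obtain ⟨g, hg⟩ : ∃ g, c - δ * c / 8 < P (m + N) g :=
    exists_lt_of_lt_ciSup ((sub_lt_self c (by positivity)).trans_le (hglb.1 ⟨m + N, rfl⟩))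
  have hheavy : ∀ x ∈ T, c / 2 ≤ P N (x⁻¹ * g) := by
    intro x hx
    have hle (y : G) : P N y ≤ ⨆ y, P N y := le_ciSup (hμ.convPow N).bddAbove_range y
    have hdefect := mul_sub_le_sub_mconv (hμ.convPow m) (hμ.convPow N) hle x g
    rw [← convPow_add hμ] at hdefect
    have hsmall : δ * ((⨆ y, P N y) - P N (x⁻¹ * g)) < δ * (c / 4) :=
      calc δ * ((⨆ y, P N y) - P N (x⁻¹ * g))
          ≤ P m x * ((⨆ y, P N y) - P N (x⁻¹ * g)) :=
            mul_le_mul_of_nonneg_right (Finset.inf'_le _ hx) (sub_nonneg.2 (hle _))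
        _ ≤ (⨆ y, P N y) - P (m + N) g := hdefect
        _ < δ * (c / 4) := by dsimp only at hN; linarith
    linarith [lt_of_mul_lt_mul_left hsmall hδ.le]
  have hsum : ∑ x ∈ T, P N (x⁻¹ * g) ≤ 1 :=
    sum_le_hasSum T (fun _ _ => (hμ.convPow N).1 _) ((hμ.convPow N).2.comp_inv_mul g)
  have hcard := T.card_nsmul_le_sum _ _ hheavy
  rw [nsmul_eq_mul] at hcard
  linarith

theorem finite_of_card_support_convPow_le (hμ : IsProbMeas μ) (hirr : MeasIrreducible μ)
    (K : ℕ) (hK : ∀ m (T : Finset G), (∀ x ∈ T, 0 < convPow μ m x) → T.card ≤ K) :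
    Finite G := by
  obtain ⟨n₀, hn₀, hreturn⟩ := hirr 1
  set S : ℕ → ℕ → Set G := fun j k => {x | 0 < convPow μ (j + n₀ * k) x}
  have hS (j : ℕ) : (⋃ k, S j k).Finite := by
    refine Directed.finite_iUnion_of_card_le (Monotone.directed_le ?_) K
      fun k T hT => hK _ T hT
    refine monotone_nat_of_le_succ fun k x hx => ?_
    simpa [S, mul_add, ← add_assoc] using convPow_pos_mul hμ hx hreturn
  have hcover : Set.univ ⊆ ⋃ j ∈ Finset.range n₀, ⋃ k, S j k := fun g _ => by
    obtain ⟨n, -, hn⟩ := hirr g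
    simp only [Set.mem_iUnion]
    exact ⟨n % n₀, Finset.mem_range.2 (Nat.mod_lt _ hn₀), n / n₀,
      by simpa [S, Nat.mod_add_div] using hn⟩
  exact Set.finite_univ_iff.1
    (((Finset.range n₀).finite_toSet.biUnion fun j _ => hS j).subset hcover)

theorem tendsto_iSup_convPow_zero [Infinite G] (hμ : IsProbMeas μ) (hirr : MeasIrreducible μ) :
    Tendsto (fun n => ⨆ g, convPow μ n g) atTop (𝓝 0) := by
  have hnonneg (n : ℕ) : 0 ≤ ⨆ g, convPow μ n g := Real.iSup_nonneg (hμ.convPow n).1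
  have hglb : IsGLB (Set.range fun n => ⨆ g, convPow μ n g) (⨅ n, ⨆ g, convPow μ n g) :=
    isGLB_ciInf ⟨0, by rintro _ ⟨n, rfl⟩; exact hnonneg n⟩
  suffices hc : ⨅ n, ⨆ g, convPow μ n g = 0 by
    rw [← hc]
    exact tendsto_atTop_isGLB (antitone_iSup_convPow hμ) hglb
  by_contra hc
  have hpos := (le_ciInf hnonneg).lt_of_ne (Ne.symm hc)
  have : Finite G := finite_of_card_support_convPow_le hμ hirr ⌊2 / ⨅ n, ⨆ g, convPow μ n g⌋₊
    fun m T hT => Nat.le_floor <| (le_div_iff₀ hpos).2 <|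
      card_mul_le_two_of_isGLB_iSup_convPow hμ hpos hglb m T hT
  exact not_finite G

theorem norm_actConv_le (hν : IsProbMeas ν) {q : ℝ} (hq : ∀ a, ν a ≤ q)
    {f : G → ℂ} {s : Finset G} {ε : ℝ} (hε : 0 ≤ ε) (hs : ∀ x ∉ s, ‖f x‖ ≤ ε) (g : G) :
    ‖actConv f ν g‖ ≤ ε + (∑ x ∈ s, ‖f x‖) * q := by
  have hweights : HasSum (fun y => ν (g⁻¹ * y)) 1 := (Equiv.mulLeft g⁻¹).hasSum_iff.2 hν.2
  have hbound (y : G) :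
      ‖f y * ν (g⁻¹ * y)‖ ≤ ε * ν (g⁻¹ * y) + if y ∈ s then ‖f y‖ * q else 0 := by
    rw [norm_mul, Complex.norm_real, Real.norm_of_nonneg (hν.1 _)]
    split_ifs with hy
    · nlinarith [mul_le_mul_of_nonneg_left (hq (g⁻¹ * y)) (norm_nonneg (f y)), hν.1 (g⁻¹ * y)]
    · rw [add_zero]
      exact mul_le_mul_of_nonneg_right (hs y hy) (hν.1 _)
  have hmajorant : HasSum (fun y => ε * ν (g⁻¹ * y) + if y ∈ s then ‖f y‖ * q else 0)
      (ε * 1 + ∑ y ∈ s, if y ∈ s then ‖f y‖ * q else 0) :=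
    (hweights.mul_left ε).add (hasSum_sum_of_ne_finset_zero fun y hy => if_neg hy)
  have hsummable : Summable fun y => ‖f y * ν (g⁻¹ * y)‖ :=
    hmajorant.summable.of_nonneg_of_le (fun _ => norm_nonneg _) hbound
  calc ‖actConv f ν g‖ = ‖∑' y, f y * ν (g⁻¹ * y)‖ := by
        rw [actConv]
        conv_rhs => rw [← (Equiv.mulLeft g).tsum_eq]
        simp
    _ ≤ ∑' y, ‖f y * ν (g⁻¹ * y)‖ := norm_tsum_le_tsum_norm hsummable
    _ ≤ ε * 1 + ∑ y ∈ s, if y ∈ s then ‖f y‖ * q else 0 :=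
        hsummable.tsum_le_tsum hbound hmajorant.summable |>.trans_eq hmajorant.tsum_eq
    _ = ε + (∑ x ∈ s, ‖f x‖) * q := by
        rw [mul_one, Finset.sum_ite_of_true fun _ hy => hy, Finset.sum_mul]

end Convolution

/-- For an infinite discrete group `G` and an irreducible probability
measure `μ` on `G`, the convolution operators `f ↦ f ⋆ μ^{⋆n}` on `c₀(G)` converge to
zero in the strong operator topology: `‖f ⋆ μ^{⋆n}‖_∞ → 0` for every `f ∈ c₀(G)`. -/
theorem concentration_c0 [Group G] [Infinite G] (μ : G → ℝ)
    (hμ : IsProbMeas μ) (hirr : MeasIrreducible μ)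
    (f : G → ℂ) (hf : ZeroAtInfty f) :
    Tendsto (fun n : ℕ => ⨆ g : G, ‖actConv f (convPow μ n) g‖) atTop (𝓝 0) := by
  refine tendsto_order.2 ⟨fun a ha => Eventually.of_forall fun n =>
    ha.trans_le (Real.iSup_nonneg fun g => norm_nonneg _), fun ε hε => ?_⟩
  obtain ⟨s, hs⟩ : ∃ s : Finset G, ∀ x ∉ s, ‖f x‖ ≤ ε / 2 := by
    have hsmall := eventually_cofinite.1
      (hf.eventually (Metric.closedBall_mem_nhds 0 (half_pos hε)))
    exact ⟨hsmall.toFinset, fun x hx => by simpa using hx⟩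
  have hbound : Tendsto (fun n => ε / 2 + (∑ x ∈ s, ‖f x‖) * ⨆ g, convPow μ n g) atTop
      (𝓝 (ε / 2 + (∑ x ∈ s, ‖f x‖) * 0)) :=
    tendsto_const_nhds.add (tendsto_const_nhds.mul (tendsto_iSup_convPow_zero hμ hirr))
  have hlimit : ε / 2 + (∑ x ∈ s, ‖f x‖) * 0 < ε := by linarith
  filter_upwards [hbound.eventually (gt_mem_nhds hlimit)] with n hn
  exact (ciSup_le fun g => norm_actConv_le (hμ.convPow n)
    (fun a => le_ciSup (hμ.convPow n).bddAbove_range a) (half_pos hε).le hs g).trans_lt hn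
end

section
/- Let G be an infinite discrete group and let μ be an irreducible probability measure on G. Then for every finite subset K ⊆ G, the concentration functions f_n(K) = sup_{x∈G} μ^{⋆n}(Kx⁻¹) converge to 0 as n → ∞. -/
open Filter Topology
open scoped Classical

variable {G : Type*}

/-!
All computations take place in `ℝ≥0∞`, where every series converges. The maxima
`s n = sup_g μ^{⋆n}(g)` decrease to a limit `c`. Let every point `h` of a finite set `T` carry mass
at least `δ > 0` under `μ^{⋆M}`. Splitting `μ^{⋆(M+n)}(x) = ∑_a μ^{⋆M}(a) μ^{⋆n}(a⁻¹x)` at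
`a = h` gives `μ^{⋆(M+n)}(x) + δ s n ≤ δ μ^{⋆n}(h⁻¹x) + s n`; summing over `h ∈ T` (the points
`h⁻¹x` are distinct) and taking the sup over `x` gives `|T| s (M+n) + |T| δ s n ≤ δ + |T| s n`,
so `|T| c ≤ 1` in the limit. Irreducibility puts `1` in the support of some `μ^{⋆p}`, `p ≥ 1`, so
`supp μ^{⋆n} ⊆ supp μ^{⋆(n+p)}`; as these supports cover the infinite group, some of them are
arbitrarily large, and `c = 0`. Finally `μ^{⋆n}(Kx⁻¹) ≤ |K| s n`.
-/

open scoped ENNReal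
open Function

lemma exists_finset_card_eq_subset_of_subset_add {α : Type*} [Infinite α] {S : ℕ → Set α}
    {p : ℕ} (hp : 0 < p) (hS : ∀ n, S n ⊆ S (n + p)) (hcover : ∀ a, ∃ n, a ∈ S n) (N : ℕ) :
    ∃ M, ∃ T : Finset α, T.card = N ∧ ↑T ⊆ S M := by
  by_contra! hsmall
  have hmono : ∀ i, Monotone fun k => S (i + k * p) := fun i =>
    monotone_nat_of_le_succ fun k => by simpa [add_mul, add_assoc] using hS (i + k * p)
  have hfinite : ∀ i, (⋃ k, S (i + k * p)).Finite := by
    intro i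
    by_contra hinf
    obtain ⟨T, hT, hTN⟩ := Set.Infinite.exists_subset_card_eq hinf N
    obtain ⟨k, hk⟩ := (hmono i).directed_le.exists_mem_subset_of_finset_subset_biUnion hT
    exact hsmall _ T hTN hk
  have hunion : (Set.univ : Set α) ⊆ ⋃ i ∈ Finset.range p, ⋃ k, S (i + k * p) := by
    intro a _
    obtain ⟨n, hn⟩ := hcover a
    simp only [Set.mem_iUnion, Finset.mem_range]
    exact ⟨n % p, Nat.mod_lt n hp, n / p, by rwa [Nat.mod_add_div']⟩
  exact Set.infinite_univ ((Set.Finite.biUnion (Finset.finite_toSet _) fun i _ => hfinite i).subset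
    hunion)

section Convolution

variable [Group G] {μ : G → ℝ≥0∞}

noncomputable def econv (ν μ : G → ℝ≥0∞) : G → ℝ≥0∞ := fun g => ∑' a, ν a * μ (a⁻¹ * g)

noncomputable def econvPow (μ : G → ℝ≥0∞) : ℕ → G → ℝ≥0∞
  | 0 => Pi.single 1 1
  | n + 1 => econv (econvPow μ n) μ

lemma tsum_econv (ν μ : G → ℝ≥0∞) : ∑' g, econv ν μ g = (∑' a, ν a) * ∑' g, μ g := by
  simp only [econv]
  rw [ENNReal.tsum_comm, ← ENNReal.tsum_mul_right]
  congr 1; funext a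
  rw [ENNReal.tsum_mul_left, ← (Equiv.mulLeft a⁻¹).tsum_eq μ]
  rfl

lemma econv_single_one (ν : G → ℝ≥0∞) : econv ν (Pi.single 1 1) = ν := by
  funext g
  rw [econv, tsum_eq_single g]
  · simp
  · intro a ha
    simp [inv_mul_eq_one, ha]

lemma econv_assoc (ν μ ρ : G → ℝ≥0∞) : econv (econv ν μ) ρ = econv ν (econv μ ρ) := by
  funext g
  simp only [econv]
  calc ∑' b, (∑' a, ν a * μ (a⁻¹ * b)) * ρ (b⁻¹ * g)
      = ∑' a, ∑' b, ν a * (μ (a⁻¹ * b) * ρ (b⁻¹ * g)) := by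
        simp only [← ENNReal.tsum_mul_right, mul_assoc]
        exact ENNReal.tsum_comm
    _ = ∑' a, ν a * ∑' c, μ c * ρ (c⁻¹ * (a⁻¹ * g)) := by
        congr 1; funext a
        rw [ENNReal.tsum_mul_left,
          ← (Equiv.mulLeft a).tsum_eq fun b => μ (a⁻¹ * b) * ρ (b⁻¹ * g)]
        simp [mul_assoc]

lemma econvPow_add (μ : G → ℝ≥0∞) (m : ℕ) :
    ∀ n, econvPow μ (m + n) = econv (econvPow μ m) (econvPow μ n)
  | 0 => (econv_single_one _).symm
  | n + 1 => by rw [← add_assoc, econvPow, econvPow_add μ m n, econv_assoc]; rfl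

lemma tsum_econvPow (hμ : ∑' g, μ g = 1) : ∀ n, ∑' g, econvPow μ n g = 1
  | 0 => by simp [econvPow]
  | n + 1 => by rw [econvPow, tsum_econv, tsum_econvPow hμ n, hμ, one_mul]

lemma econvPow_le_one (hμ : ∑' g, μ g = 1) (n : ℕ) (g : G) : econvPow μ n g ≤ 1 :=
  (tsum_econvPow hμ n).symm ▸ ENNReal.le_tsum g

lemma support_econvPow_subset_add {p : ℕ} (h1 : econvPow μ p 1 ≠ 0) (n : ℕ) :
    support (econvPow μ n) ⊆ support (econvPow μ (n + p)) := by
  intro g hg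
  rw [mem_support, econvPow_add, econv]
  exact fun h => mul_ne_zero hg (by simpa using h1) (ENNReal.tsum_eq_zero.1 h g)

lemma sum_comp_inv_mul_le_tsum (f : G → ℝ≥0∞) (T : Finset G) (x : G) :
    ∑ h ∈ T, f (h⁻¹ * x) ≤ ∑' g, f g :=
  (ENNReal.sum_le_tsum T).trans_eq (((Equiv.inv G).trans (Equiv.mulRight x)).tsum_eq f)

lemma econv_le_tsum_mul_iSup (ν μ : G → ℝ≥0∞) (x : G) :
    econv ν μ x ≤ (∑' a, ν a) * ⨆ g, μ g := by
  rw [econv, ← ENNReal.tsum_mul_right]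
  exact ENNReal.tsum_le_tsum fun a => by gcongr; exact le_iSup μ _

lemma econv_add_mul_iSup_le {ν : G → ℝ≥0∞} (hν : ∑' a, ν a = 1) {h : G} {δ : ℝ≥0∞}
    (hδ : δ ≤ ν h) (x : G) :
    econv ν μ x + δ * ⨆ g, μ g ≤ δ * μ (h⁻¹ * x) + ⨆ g, μ g := by
  set s := ⨆ g, μ g
  set q := μ (h⁻¹ * x)
  set ρ := ∑' a, if a = h then 0 else ν a
  have hsplit : econv ν μ x ≤ ν h * q + ρ * s := by
    rw [econv, ENNReal.tsum_eq_add_tsum_ite h, ← ENNReal.tsum_mul_right]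
    gcongr with a
    split_ifs
    · simp
    · gcongr; exact le_iSup μ _
  obtain ⟨e, he⟩ : ∃ e, ν h = δ + e := ⟨ν h - δ, (add_tsub_cancel_of_le hδ).symm⟩
  have hmass : δ + e + ρ = 1 := by rw [← he, ← hν, ENNReal.tsum_eq_add_tsum_ite h]
  calc econv ν μ x + δ * s ≤ ν h * q + ρ * s + δ * s := by gcongr
    _ = δ * q + (e * q + ρ * s + δ * s) := by rw [he]; ring
    _ ≤ δ * q + (e * s + ρ * s + δ * s) := by gcongr; exact le_iSup μ _
    _ = δ * q + (δ + e + ρ) * s := by ring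
    _ = δ * q + s := by rw [hmass, one_mul]

noncomputable def supConvPow (μ : G → ℝ≥0∞) (n : ℕ) : ℝ≥0∞ := ⨆ g, econvPow μ n g

lemma supConvPow_le_one (hμ : ∑' g, μ g = 1) (n : ℕ) : supConvPow μ n ≤ 1 :=
  iSup_le (econvPow_le_one hμ n)

lemma antitone_supConvPow (hμ : ∑' g, μ g = 1) : Antitone (supConvPow μ) := by
  refine antitone_nat_of_succ_le fun n => iSup_le fun x => ?_
  rw [add_comm, econvPow_add]
  simpa [tsum_econvPow hμ, supConvPow] using
    econv_le_tsum_mul_iSup (econvPow μ 1) (econvPow μ n) x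

lemma card_mul_supConvPow_add_le (hμ : ∑' g, μ g = 1) {M : ℕ} {T : Finset G} {δ : ℝ≥0∞}
    (hT : ∀ h ∈ T, δ ≤ econvPow μ M h) (n : ℕ) :
    T.card * supConvPow μ (M + n) + T.card * δ * supConvPow μ n ≤
      δ + T.card * supConvPow μ n := by
  set s := supConvPow μ n
  have hx : ∀ x, T.card * econvPow μ (M + n) x + T.card * δ * s ≤ δ + T.card * s := by
    intro x
    calc T.card * econvPow μ (M + n) x + T.card * δ * s
        = ∑ h ∈ T, (econvPow μ (M + n) x + δ * s) := by
          simp [mul_assoc]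
      _ ≤ ∑ h ∈ T, (δ * econvPow μ n (h⁻¹ * x) + s) := by
          refine Finset.sum_le_sum fun h hh => ?_
          rw [econvPow_add]
          exact econv_add_mul_iSup_le (tsum_econvPow hμ M) (hT h hh) x
      _ = δ * ∑ h ∈ T, econvPow μ n (h⁻¹ * x) + T.card * s := by
          simp [Finset.sum_add_distrib, Finset.mul_sum]
      _ ≤ δ * 1 + T.card * s := by
          gcongr
          exact (sum_comp_inv_mul_le_tsum _ T x).trans_eq (tsum_econvPow hμ n)
      _ = δ + T.card * s := by rw [mul_one]
  calc T.card * supConvPow μ (M + n) + T.card * δ * s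
      = ⨆ x, (T.card * econvPow μ (M + n) x + T.card * δ * s) := by
        rw [supConvPow, ENNReal.mul_iSup, ENNReal.iSup_add]
    _ ≤ δ + T.card * s := iSup_le hx

lemma card_mul_iInf_supConvPow_le_one (hμ : ∑' g, μ g = 1) {M : ℕ} {T : Finset G}
    {δ : ℝ≥0∞} (hδ : δ ≠ 0) (hT : ∀ h ∈ T, δ ≤ econvPow μ M h) :
    T.card * ⨅ n, supConvPow μ n ≤ 1 := by
  obtain rfl | ⟨h₀, hh₀⟩ := T.eq_empty_or_nonempty
  · simp
  have hδtop : δ ≠ ∞ :=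
    ne_top_of_le_ne_top ENNReal.one_ne_top ((hT h₀ hh₀).trans (econvPow_le_one hμ M h₀))
  have hcard : (T.card : ℝ≥0∞) ≠ ∞ := ENNReal.natCast_ne_top _
  set c := ⨅ n, supConvPow μ n
  have hc : (T.card : ℝ≥0∞) * c ≠ ∞ := ENNReal.mul_ne_top hcard
    (ne_top_of_le_ne_top ENNReal.one_ne_top ((iInf_le _ 0).trans (supConvPow_le_one hμ 0)))
  have hs : Tendsto (supConvPow μ) atTop (𝓝 c) := tendsto_atTop_iInf (antitone_supConvPow hμ)
  have hsM : Tendsto (fun n => supConvPow μ (M + n)) atTop (𝓝 c) := by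
    simpa only [add_comm M] using (tendsto_add_atTop_iff_nat M).2 hs
  have hlim : T.card * c + T.card * δ * c ≤ δ + T.card * c :=
    le_of_tendsto_of_tendsto'
      ((ENNReal.Tendsto.const_mul hsM (.inr hcard)).add
        (ENNReal.Tendsto.const_mul hs (.inr (ENNReal.mul_ne_top hcard hδtop))))
      ((ENNReal.Tendsto.const_mul hs (.inr hcard)).const_add δ)
      (card_mul_supConvPow_add_le hμ hT)
  rw [add_comm δ, ENNReal.add_le_add_iff_left hc, mul_right_comm] at hlim
  exact (ENNReal.mul_le_mul_iff_left hδ hδtop).1 (hlim.trans_eq (one_mul δ).symm)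

lemma tendsto_supConvPow_atTop_zero [Infinite G] (hμ : ∑' g, μ g = 1)
    (hirr : ∀ g, ∃ n, 1 ≤ n ∧ econvPow μ n g ≠ 0) :
    Tendsto (supConvPow μ) atTop (𝓝 0) := by
  obtain ⟨p, hp, h1⟩ := hirr 1
  suffices hc : ⨅ n, supConvPow μ n = 0 by
    simpa [hc] using tendsto_atTop_iInf (antitone_supConvPow hμ)
  by_contra hc
  obtain ⟨N, hN⟩ := ENNReal.exists_nat_mul_gt hc ENNReal.one_ne_top
  obtain ⟨M, T, hTN, hT⟩ := exists_finset_card_eq_subset_of_subset_add hp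
    (support_econvPow_subset_add h1) (fun g => (hirr g).imp fun _ hn => hn.2) N
  have hδ : T.inf (econvPow μ M) ≠ 0 := by
    rw [← pos_iff_ne_zero, Finset.lt_inf_iff ENNReal.zero_lt_top]
    exact fun h hh => pos_iff_ne_zero.2 (hT hh)
  exact (card_mul_iInf_supConvPow_le_one hμ hδ fun h hh => Finset.inf_le hh).not_gt (hTN ▸ hN)

end Convolution

section RealValued

variable [Group G] {μ : G → ℝ}

lemma tsum_ofReal_eq_one (hμ : IsProbMeas μ) : ∑' g, ENNReal.ofReal (μ g) = 1 := by
  rw [← ENNReal.ofReal_tsum_of_nonneg hμ.1 hμ.2.summable, hμ.2.tsum_eq, ENNReal.ofReal_one]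

lemma convPow_eq_toReal_econvPow (hμ : IsProbMeas μ) :
    ∀ n g, convPow μ n g = (econvPow (fun g => ENNReal.ofReal (μ g)) n g).toReal
  | 0, g => by by_cases h : g = 1 <;> simp [convPow, econvPow, h]
  | n + 1, g => by
    have hfin := econvPow_le_one (tsum_ofReal_eq_one hμ)
    rw [convPow, mconv, econvPow, econv, ENNReal.tsum_toReal_eq fun a =>
      ENNReal.mul_ne_top (ne_top_of_le_ne_top ENNReal.one_ne_top (hfin n a)) ENNReal.ofReal_ne_top]
    simp [convPow_eq_toReal_econvPow hμ n, ENNReal.toReal_ofReal (hμ.1 _)]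

end RealValued

/-- For an infinite discrete group `G` and an irreducible probability
measure `μ`, the concentration functions `f_n(K) = sup_x μ^{⋆n}(K x⁻¹)` converge to `0`
for every finite `K ⊆ G`. -/
theorem concentration_functions [Group G] [Infinite G] (μ : G → ℝ)
    (hμ : IsProbMeas μ) (hirr : MeasIrreducible μ) (K : Finset G) :
    Tendsto (fun n : ℕ => ⨆ x : G, ∑ k ∈ K, convPow μ n (k * x⁻¹)) atTop (𝓝 0) := by
  set ν : G → ℝ≥0∞ := fun g => ENNReal.ofReal (μ g)
  have hν : ∑' g, ν g = 1 := tsum_ofReal_eq_one hμ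
  have hzero : Tendsto (supConvPow ν) atTop (𝓝 0) := by
    refine tendsto_supConvPow_atTop_zero hν fun g => ?_
    obtain ⟨n, hn, hpos⟩ := hirr g
    refine ⟨n, hn, fun h => hpos.ne' ?_⟩
    rw [convPow_eq_toReal_econvPow hμ, h, ENNReal.toReal_zero]
  have hbound : ∀ n x, ∑ k ∈ K, convPow μ n (k * x⁻¹) ≤ K.card * (supConvPow ν n).toReal := by
    intro n x
    refine (Finset.sum_le_card_nsmul _ _ _ fun k _ => ?_).trans_eq (nsmul_eq_mul _ _)
    rw [convPow_eq_toReal_econvPow hμ]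
    exact ENNReal.toReal_mono
      (ne_top_of_le_ne_top ENNReal.one_ne_top (supConvPow_le_one hν n)) (le_iSup _ _)
  refine squeeze_zero (fun n => Real.iSup_nonneg fun x => Finset.sum_nonneg fun k _ => ?_)
    (fun n => ciSup_le (hbound n)) ?_
  · rw [convPow_eq_toReal_econvPow hμ]
    exact ENNReal.toReal_nonneg
  · simpa using ((ENNReal.tendsto_toReal ENNReal.zero_ne_top).comp hzero).const_mul (K.card : ℝ)
end

section
/- Let G be an infinite discrete group and let μ be an irreducible probability measure on G. Then there exists a strictly increasing sequence (n_i) of natural numbers such that for every s ∈ ℕ and every g ∈ G, μ^{⋆(n_i+s)}({g}) → 0 as i → ∞; that is, the measures μ^{⋆(n_i+s)} converge to 0 in the weak* topology σ(ℓ¹(G), c₀(G)) simultaneously for all shifts s. -/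
open Filter Topology
open scoped Classical

variable {G : Type*}

/-! The whole sequence `n_i = i` works: the maximal mass `M n = sup_g μ^{⋆n}(g)` tends to `0`.
It is antitone, say with limit `c`. If `c > 0`, let `x n` nearly maximize `μ^{⋆n}`. Since
`μ^{⋆(n+k)}(g)` is the average of `μ^{⋆n}(g h⁻¹) ≤ M n` against `μ^{⋆k}(h)`, every `h` charged by
`μ^{⋆k}` satisfies `μ^{⋆n}(x (n + k) h⁻¹) → c`. On an infinite group, irreducibility supplies any
number `N` of points charged by one common power `μ^{⋆K}`, which gives `N` distinct points of
`μ^{⋆n}`-mass close to `c`: impossible once `N c > 1`. -/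

open scoped ENNReal

-- In `ℝ≥0∞` sums can be exchanged freely; `convPow_eq_toReal` transfers the results.
noncomputable def ennConvPow [Group G] (ν : G → ℝ≥0∞) : ℕ → G → ℝ≥0∞
  | 0 => fun g => if g = 1 then 1 else 0
  | n + 1 => fun g => ∑' a : G, ennConvPow ν n a * ν (a⁻¹ * g)

section ennConvPow

variable [Group G] {ν : G → ℝ≥0∞}

lemma tsum_ennConvPow (hν : ∑' g, ν g = 1) : ∀ n, ∑' g : G, ennConvPow ν n g = 1
  | 0 => by simp [ennConvPow]
  | n + 1 => calc
      ∑' g, ennConvPow ν (n + 1) g = ∑' (a : G) (g : G), ennConvPow ν n a * ν (a⁻¹ * g) :=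
        ENNReal.tsum_comm
      _ = ∑' a, ennConvPow ν n a * ∑' g, ν g := by
        refine tsum_congr fun a => ?_
        rw [ENNReal.tsum_mul_left, ← (Equiv.mulLeft a⁻¹).tsum_eq ν]
        rfl
      _ = 1 := by rw [hν]; simpa using tsum_ennConvPow hν n

lemma ennConvPow_ne_top (hν : ∑' g, ν g = 1) (n : ℕ) (g : G) : ennConvPow ν n g ≠ ⊤ :=
  ne_top_of_le_ne_top ENNReal.one_ne_top (tsum_ennConvPow hν n ▸ ENNReal.le_tsum g)

lemma ennConvPow_add (n : ℕ) : ∀ (k : ℕ) (g : G),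
    ennConvPow ν (n + k) g = ∑' h, ennConvPow ν n (g * h⁻¹) * ennConvPow ν k h
  | 0, g => by simp [ennConvPow]
  | k + 1, g => calc
      ennConvPow ν (n + k + 1) g
          = ∑' (h : G) (b : G), ennConvPow ν n (b * h⁻¹) * ennConvPow ν k h * ν (b⁻¹ * g) := by
        simp only [ennConvPow, ennConvPow_add n k, ← ENNReal.tsum_mul_right]
        exact ENNReal.tsum_comm
      _ = ∑' (h : G) (b : G), ennConvPow ν n (g * b⁻¹) * ennConvPow ν k h * ν (h⁻¹ * b) := by
        refine tsum_congr fun h => ?_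
        rw [← ((Equiv.inv G).trans ((Equiv.mulLeft g).trans (Equiv.mulRight h))).tsum_eq]
        simp [mul_assoc]
      _ = ∑' h, ennConvPow ν n (g * h⁻¹) * ennConvPow ν (k + 1) h := by
        simp only [ennConvPow, ← ENNReal.tsum_mul_left]
        rw [ENNReal.tsum_comm]
        simp only [mul_assoc]

end ennConvPow

section convPow

variable [Group G] {μ : G → ℝ}

lemma IsProbMeas.tsum_ofReal (hμ : IsProbMeas μ) : ∑' g, (ENNReal.ofReal ∘ μ) g = 1 := by
  rw [Function.comp_def, ← ENNReal.ofReal_tsum_of_nonneg hμ.1 hμ.2.summable, hμ.2.tsum_eq,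
    ENNReal.ofReal_one]

lemma convPow_eq_toReal (hμ : IsProbMeas μ) :
    ∀ (n : ℕ) (g : G), convPow μ n g = (ennConvPow (ENNReal.ofReal ∘ μ) n g).toReal
  | 0, g => by by_cases hg : g = 1 <;> simp [convPow, ennConvPow, hg]
  | n + 1, g => by
    have hfin := ennConvPow_ne_top hμ.tsum_ofReal n
    simp only [convPow, mconv, ennConvPow, Function.comp_apply,
      ENNReal.tsum_toReal_eq fun a => ENNReal.mul_ne_top (hfin a) ENNReal.ofReal_ne_top,
      ENNReal.toReal_mul, ← convPow_eq_toReal hμ n, ENNReal.toReal_ofReal (hμ.1 _)]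

lemma hasSum_toReal_of_tsum_eq {α : Type*} {f : α → ℝ≥0∞} {a : ℝ≥0∞} (hf : ∑' x, f x = a)
    (ha : a ≠ ⊤) : HasSum (fun x => (f x).toReal) a.toReal := by
  convert ENNReal.hasSum_toReal (hf ▸ ha)
  rw [← hf, ENNReal.tsum_toReal_eq fun x => ne_top_of_le_ne_top (hf ▸ ha) (ENNReal.le_tsum x)]

lemma convPow_nonneg (hμ : IsProbMeas μ) (n : ℕ) (g : G) : 0 ≤ convPow μ n g := by
  rw [convPow_eq_toReal hμ]
  exact ENNReal.toReal_nonneg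

lemma hasSum_convPow (hμ : IsProbMeas μ) (n : ℕ) : HasSum (convPow μ n) 1 := by
  simpa [← funext (convPow_eq_toReal hμ n)] using
    hasSum_toReal_of_tsum_eq (tsum_ennConvPow hμ.tsum_ofReal n) ENNReal.one_ne_top

lemma hasSum_convPow_add (hμ : IsProbMeas μ) (n k : ℕ) (g : G) :
    HasSum (fun h => convPow μ n (g * h⁻¹) * convPow μ k h) (convPow μ (n + k) g) := by
  simpa [convPow_eq_toReal hμ] using hasSum_toReal_of_tsum_eq (ennConvPow_add n k g).symm
    (ennConvPow_ne_top hμ.tsum_ofReal (n + k) g)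

lemma convPow_le_one (hμ : IsProbMeas μ) (n : ℕ) (g : G) : convPow μ n g ≤ 1 :=
  le_hasSum (hasSum_convPow hμ n) g fun h _ => convPow_nonneg hμ n h

lemma sum_convPow_mul_inv_le_one (hμ : IsProbMeas μ) (n : ℕ) (a : G) (F : Finset G) :
    ∑ h ∈ F, convPow μ n (a * h⁻¹) ≤ 1 := by
  have : HasSum (fun h => convPow μ n (a * h⁻¹)) 1 :=
    ((Equiv.inv G).trans (Equiv.mulLeft a)).hasSum_iff.2 (hasSum_convPow hμ n)
  exact sum_le_hasSum F (fun h _ => convPow_nonneg hμ n _) this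

lemma convPow_add_pos (hμ : IsProbMeas μ) {n k : ℕ} {g h : G} (hg : 0 < convPow μ n g)
    (hh : 0 < convPow μ k h) : 0 < convPow μ (n + k) (g * h) := by
  have := le_hasSum (hasSum_convPow_add hμ n k (g * h)) h fun j _ =>
    mul_nonneg (convPow_nonneg hμ n _) (convPow_nonneg hμ k j)
  simp only [mul_inv_cancel_right] at this
  exact (mul_pos hg hh).trans_le this

end convPow

noncomputable def convPowSup [Group G] (μ : G → ℝ) (n : ℕ) : ℝ := ⨆ g, convPow μ n g

section convPowSup

variable [Group G] {μ : G → ℝ}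

lemma convPow_le_convPowSup (hμ : IsProbMeas μ) (n : ℕ) (g : G) :
    convPow μ n g ≤ convPowSup μ n :=
  le_ciSup ⟨1, Set.forall_mem_range.2 (convPow_le_one hμ n)⟩ g

lemma convPowSup_nonneg (hμ : IsProbMeas μ) (n : ℕ) : 0 ≤ convPowSup μ n :=
  (convPow_nonneg hμ n 1).trans (convPow_le_convPowSup hμ n 1)

lemma antitone_convPowSup (hμ : IsProbMeas μ) : Antitone (convPowSup μ) :=
  antitone_nat_of_succ_le fun n => ciSup_le fun g => by
    have hbound := (hasSum_convPow hμ 1).mul_left (convPowSup μ n)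
    rw [mul_one] at hbound
    exact hasSum_le (fun h => mul_le_mul_of_nonneg_right (convPow_le_convPowSup hμ n _)
      (convPow_nonneg hμ 1 h)) (hasSum_convPow_add hμ n 1 g) hbound

lemma tendsto_convPowSup (hμ : IsProbMeas μ) :
    Tendsto (convPowSup μ) atTop (𝓝 (⨅ n, convPowSup μ n)) :=
  tendsto_atTop_ciInf (antitone_convPowSup hμ)
    ⟨0, Set.forall_mem_range.2 (convPowSup_nonneg hμ)⟩

lemma convPow_mul_sub_le (hμ : IsProbMeas μ) (n k : ℕ) (g h : G) :
    convPow μ k h * (convPowSup μ n - convPow μ n (g * h⁻¹)) ≤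
      convPowSup μ n - convPow μ (n + k) g := by
  have hsum : HasSum (fun h => convPow μ k h * (convPowSup μ n - convPow μ n (g * h⁻¹)))
      (convPowSup μ n - convPow μ (n + k) g) := by
    have := ((hasSum_convPow hμ k).mul_right (convPowSup μ n)).sub (hasSum_convPow_add hμ n k g)
    rw [one_mul] at this
    simp only [mul_comm (convPow μ n _)] at this
    simpa only [mul_sub] using this
  exact le_hasSum hsum h fun j _ => mul_nonneg (convPow_nonneg hμ k j)
    (sub_nonneg.2 (convPow_le_convPowSup hμ n _))

lemma exists_tendsto_convPow_of_tendsto_convPowSup (hμ : IsProbMeas μ) {c : ℝ}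
    (hc : Tendsto (convPowSup μ) atTop (𝓝 c)) :
    ∃ x : ℕ → G, Tendsto (fun n => convPow μ n (x n)) atTop (𝓝 c) := by
  have hex (n : ℕ) : ∃ g, convPowSup μ n - 1 / (n + 1) < convPow μ n g :=
    exists_lt_of_lt_ciSup (sub_lt_self _ Nat.one_div_pos_of_nat)
  choose x hx using hex
  refine ⟨x, tendsto_of_tendsto_of_tendsto_of_le_of_le ?_ hc (fun n => (hx n).le)
    (fun n => convPow_le_convPowSup hμ n (x n))⟩
  simpa using hc.sub tendsto_one_div_add_atTop_nhds_zero_nat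

lemma tendsto_convPow_mul_inv (hμ : IsProbMeas μ) {c : ℝ}
    (hc : Tendsto (convPowSup μ) atTop (𝓝 c)) {x : ℕ → G}
    (hx : Tendsto (fun n => convPow μ n (x n)) atTop (𝓝 c)) {k : ℕ} {h : G}
    (hkh : 0 < convPow μ k h) :
    Tendsto (fun n => convPow μ n (x (n + k) * h⁻¹)) atTop (𝓝 c) := by
  have hlower (n : ℕ) : convPowSup μ n - (convPowSup μ n - convPow μ (n + k) (x (n + k))) /
      convPow μ k h ≤ convPow μ n (x (n + k) * h⁻¹) := by
    rw [sub_le_comm, le_div_iff₀ hkh, mul_comm]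
    exact convPow_mul_sub_le hμ n k _ h
  refine tendsto_of_tendsto_of_tendsto_of_le_of_le ?_ hc hlower
    (fun n => convPow_le_convPowSup hμ n _)
  have hshift := hx.comp (tendsto_add_atTop_nat k)
  simpa using hc.sub ((hc.sub hshift).div_const (convPow μ k h))

end convPowSup

section irreducible

variable [Group G] {μ : G → ℝ}

lemma convPow_pos_of_modEq (hμ : IsProbMeas μ) {m n K : ℕ} {g : G} (hm : 0 < convPow μ m 1)
    (hg : 0 < convPow μ n g) (hnK : n ≤ K) (hmod : n ≡ K [MOD m]) : 0 < convPow μ K g := by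
  obtain ⟨t, ht⟩ := (Nat.modEq_iff_dvd' hnK).1 hmod
  obtain rfl : K = n + m * t := by omega
  clear ht hnK hmod
  induction t with
  | zero => simpa using hg
  | succ t ih => simpa [mul_add, ← add_assoc] using convPow_add_pos hμ ih hm

-- With `1` charged by `μ^{⋆m}`, the supports of `μ^{⋆n}` grow along `n ↦ n + m`, so points whose
-- charging exponents agree mod `m` are all charged by one large power.
lemma exists_finset_convPow_pos [Infinite G] (hμ : IsProbMeas μ) (hirr : MeasIrreducible μ)
    (N : ℕ) : ∃ K, ∃ F : Finset G, F.card = N ∧ ∀ h ∈ F, 0 < convPow μ K h := by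
  obtain ⟨m, hm1, hm⟩ := hirr 1
  choose t _ ht using hirr
  obtain ⟨r, hr⟩ := Finite.exists_infinite_fiber fun g => (⟨t g % m, Nat.mod_lt _ hm1⟩ : Fin m)
  obtain ⟨F, hFr, hFN⟩ := (Set.infinite_coe_iff.1 hr).exists_subset_card_eq N
  refine ⟨r + m * F.sup t, F, hFN, fun h hh => convPow_pos_of_modEq hμ hm (ht h) ?_ ?_⟩
  · calc t h ≤ F.sup t := Finset.le_sup hh
      _ ≤ m * F.sup t := Nat.le_mul_of_pos_left _ hm1
      _ ≤ r + m * F.sup t := Nat.le_add_left _ _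
  · have : t h % m = r := congrArg Fin.val (hFr hh)
    simp [Nat.ModEq, this, Nat.mod_eq_of_lt r.isLt]

theorem tendsto_convPowSup_zero [Infinite G] (hμ : IsProbMeas μ) (hirr : MeasIrreducible μ) :
    Tendsto (convPowSup μ) atTop (𝓝 0) := by
  set c := ⨅ n, convPowSup μ n
  have hc := tendsto_convPowSup hμ
  suffices c ≤ 0 from (le_antisymm this (le_ciInf (convPowSup_nonneg hμ))) ▸ hc
  by_contra! hc0
  obtain ⟨N, hN⟩ := exists_nat_gt c⁻¹
  obtain ⟨K, F, hFN, hF⟩ := exists_finset_convPow_pos hμ hirr N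
  obtain ⟨x, hx⟩ := exists_tendsto_convPow_of_tendsto_convPowSup hμ hc
  have hsum := tendsto_finsetSum F fun h hh => tendsto_convPow_mul_inv hμ hc hx (hF h hh)
  have hle : ∑ _h ∈ F, c ≤ 1 :=
    le_of_tendsto' hsum fun n => sum_convPow_mul_inv_le_one hμ n _ F
  rw [Finset.sum_const, hFN, nsmul_eq_mul] at hle
  have := (inv_lt_iff_one_lt_mul₀ hc0).1 hN
  linarith

end irreducible

/-- For an infinite discrete group and an irreducible probability
measure `μ`, there is a subsequence `(n_i)` such that `μ^{⋆(n_i+s)} → 0` in the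
weak* topology `σ(ℓ¹(G), c₀(G))` (equivalently, pointwise) for every shift `s`. -/
theorem subsequence_weakstar_zero [Group G] [Infinite G] (μ : G → ℝ)
    (hμ : IsProbMeas μ) (hirr : MeasIrreducible μ) :
    ∃ n : ℕ → ℕ, StrictMono n ∧
      ∀ s : ℕ, ∀ g : G, Tendsto (fun i : ℕ => convPow μ (n i + s) g) atTop (𝓝 0) :=
  ⟨id, strictMono_id, fun s g => squeeze_zero (fun _ => convPow_nonneg hμ _ g)
    (fun _ => convPow_le_convPowSup hμ _ g)
    ((tendsto_convPowSup_zero hμ hirr).comp (tendsto_add_atTop_nat s))⟩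
end
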